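/- arXiv:0811.2609 — 4 statements merged into one kernel-verified Lean document; each statement's English description precedes it below -/
import Mathlib

section
/- Let H = (V, E) be a c-uniform hypergraph with density at least ε > 0, i.e., |E| ≥ ε · C(|V|, c). Then H has a matching of size at least (ε/c²)·(|V| − c + 1). -/
/-- A `c`-uniform hypergraph with density at least `ε > 0`, i.e.
`|E| ≥ ε · C(|V|, c)`, has a matching of size at least `(ε/c²)·(|V| − c + 1)`. -/
theorem stmt1 {V : Type*} [Fintype V] [DecidableEq V] (c : ℕ) (hc : 0 < c) (ε : ℝ)
    (hε : 0 < ε) (E : Finset (Finset V)) (hE : ∀ e ∈ E, e.card = c)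
    (hdens : ε * ((Fintype.card V).choose c : ℝ) ≤ E.card) :
    ∃ M ⊆ E, ((M : Set (Finset V)).Pairwise fun a b => Disjoint a b) ∧
      ε / (c : ℝ) ^ 2 * ((Fintype.card V : ℝ) - c + 1) ≤ M.card := by
  classical
  obtain ⟨n, hn⟩ : ∃ n, Fintype.card V = n := ⟨_, rfl⟩
  rw [hn] at hdens ⊢
  rcases lt_or_ge n c with hnc | hnc
  · -- trivial case: n < c, RHS is nonpositive
    refine ⟨∅, Finset.empty_subset _, by simp, ?_⟩
    have h1 : (n : ℝ) + 1 ≤ c := by exact_mod_cast hnc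
    have h2 : (0:ℝ) < ε / (c:ℝ)^2 := by
      apply div_pos hε
      positivity
    have : ε / (c:ℝ)^2 * ((n:ℝ) - c + 1) ≤ 0 :=
      mul_nonpos_of_nonneg_of_nonpos h2.le (by linarith)
    simpa using this
  · -- main case
    have hn1 : 1 ≤ n := le_trans hc hnc
    -- degree bound
    have hdeg : ∀ v : V, (E.filter (fun e => v ∈ e)).card ≤ (n-1).choose (c-1) := by
      intro v
      have hsub : (E.filter (fun e => v ∈ e)).image (fun e => e.erase v)
          ⊆ (Finset.univ.erase v).powersetCard (c-1) := by
        intro s hs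
        obtain ⟨e, he, rfl⟩ := Finset.mem_image.mp hs
        rw [Finset.mem_filter] at he
        rw [Finset.mem_powersetCard]
        refine ⟨Finset.erase_subset_erase v (Finset.subset_univ e), ?_⟩
        rw [Finset.card_erase_of_mem he.2, hE e he.1]
      have hinj : Set.InjOn (fun e : Finset V => e.erase v) (↑(E.filter (fun e => v ∈ e)) : Set (Finset V)) := by
        intro a ha b hb hab
        rw [Finset.coe_filter, Set.mem_setOf_eq] at ha hb
        have : insert v (a.erase v) = insert v (b.erase v) := by
          simpa using congrArg (insert v) hab
        rwa [Finset.insert_erase ha.2, Finset.insert_erase hb.2] at this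
      calc (E.filter (fun e => v ∈ e)).card
          = ((E.filter (fun e => v ∈ e)).image (fun e => e.erase v)).card :=
            (Finset.card_image_of_injOn hinj).symm
        _ ≤ ((Finset.univ.erase v).powersetCard (c-1)).card := Finset.card_le_card hsub
        _ = (n-1).choose (c-1) := by
            rw [Finset.card_powersetCard, Finset.card_erase_of_mem (Finset.mem_univ v), Finset.card_univ, hn]
    -- maximum matching
    set S : Finset (Finset (Finset V)) := E.powerset.filter
        (fun M => (↑M : Set (Finset V)).Pairwise fun a b => Disjoint a b) with hS
    have hSne : ∅ ∈ S := by simp [hS]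
    obtain ⟨M, hM, hMmax⟩ := Finset.exists_max_image S Finset.card ⟨∅, hSne⟩
    rw [hS, Finset.mem_filter, Finset.mem_powerset] at hM
    obtain ⟨hMsub, hMdisj⟩ := hM
    refine ⟨M, hMsub, hMdisj, ?_⟩
    -- maximality: every edge meets M
    have hmeet : ∀ e ∈ E, ∃ m ∈ M, ¬ Disjoint e m := by
      intro e he
      by_contra h
      push_neg at h
      have heM : e ∉ M := by
        intro heM
        have hd := h e heM
        rw [disjoint_self] at hd
        have h0 := hE e he
        rw [hd] at h0
        simp at h0
        omega
      have hins : insert e M ∈ S := by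
        rw [hS, Finset.mem_filter, Finset.mem_powerset]
        refine ⟨Finset.insert_subset he hMsub, ?_⟩
        rw [Finset.coe_insert]
        apply Set.Pairwise.insert hMdisj
        intro m hm _
        exact ⟨h m hm, (h m hm).symm⟩
      have := hMmax _ hins
      rw [Finset.card_insert_of_notMem heM] at this
      omega
    -- counting
    have hcover : E ⊆ M.biUnion (fun m => m.biUnion (fun v => E.filter (fun e => v ∈ e))) := by
      intro e he
      obtain ⟨m, hm, hnd⟩ := hmeet e he
      rw [Finset.not_disjoint_iff] at hnd
      obtain ⟨v, hve, hvm⟩ := hnd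
      rw [Finset.mem_biUnion]
      exact ⟨m, hm, Finset.mem_biUnion.mpr ⟨v, hvm, Finset.mem_filter.mpr ⟨he, hve⟩⟩⟩
    have hcount : E.card ≤ M.card * (c * (n-1).choose (c-1)) := by
      calc E.card ≤ (M.biUnion (fun m => m.biUnion (fun v => E.filter (fun e => v ∈ e)))).card :=
            Finset.card_le_card hcover
        _ ≤ ∑ m ∈ M, (m.biUnion (fun v => E.filter (fun e => v ∈ e))).card :=
            Finset.card_biUnion_le
        _ ≤ ∑ m ∈ M, (c * (n-1).choose (c-1)) := by
            apply Finset.sum_le_sum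
            intro m hm
            calc (m.biUnion (fun v => E.filter (fun e => v ∈ e))).card
                ≤ ∑ v ∈ m, (E.filter (fun e => v ∈ e)).card := Finset.card_biUnion_le
              _ ≤ ∑ v ∈ m, (n-1).choose (c-1) := Finset.sum_le_sum (fun v _ => hdeg v)
              _ = c * (n-1).choose (c-1) := by
                  rw [Finset.sum_const, hE m (hMsub hm)]; ring
        _ = M.card * (c * (n-1).choose (c-1)) := by rw [Finset.sum_const]; ring
    -- binomial identity: n * choose (n-1) (c-1) = choose n c * c
    have hid : n * (n-1).choose (c-1) = n.choose c * c := by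
      obtain ⟨m, rfl⟩ : ∃ m, n = m + 1 := ⟨n - 1, by omega⟩
      obtain ⟨k, rfl⟩ : ∃ k, c = k + 1 := ⟨c - 1, by omega⟩
      simpa using Nat.add_one_mul_choose_eq m k
    -- arithmetic
    set K : ℝ := ((n-1).choose (c-1) : ℝ) with hK
    have hKpos : 0 < K := by
      rw [hK]
      exact_mod_cast Nat.choose_pos (show c-1 ≤ n-1 by omega)
    have hid' : (n.choose c : ℝ) * c = n * K := by rw [hK]; exact_mod_cast hid.symm
    have hcount' : (E.card : ℝ) ≤ M.card * (c * K) := by rw [hK]; exact_mod_cast hcount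
    have hcpos : (0:ℝ) < c := by exact_mod_cast hc
    have hmain : ε * n ≤ M.card * c^2 := by
      have h1 : ε * n * K ≤ (M.card * c^2) * K := by
        have : ε * (n.choose c : ℝ) * c ≤ M.card * (c * K) * c := by
          apply mul_le_mul_of_nonneg_right (le_trans hdens hcount') hcpos.le
        calc ε * n * K = ε * ((n.choose c : ℝ) * c) := by rw [hid']; ring
          _ ≤ M.card * (c * K) * c := by linarith [this]
          _ = (M.card * c^2) * K := by ring
      exact le_of_mul_le_mul_right h1 hKpos
    rw [div_mul_eq_mul_div, div_le_iff₀ (by positivity : (0:ℝ) < (c:ℝ)^2)]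
    have hc1 : (1:ℝ) ≤ c := by exact_mod_cast hc
    nlinarith [hε.le]
end

section
/- Suppose an m × n measurement matrix A is (e₀, e₁, e'₀, e'₁)-correcting for d-sparse vectors, and that (e'₀+e'₁+1) divides d. Then (max{e₀, e₁} + 1)/(e'₀ + e'₁ + 1) ≤ m/d. -/
/-! The vectors `x_k` whose support is the first `k (e₀' + e₁' + 1)` coordinates form a chain of
`d`-sparse vectors in which consecutive members differ in `e₀' + e₁' + 1` coordinates. No
decoding `z` can be `(e₀', e₁')`-close to two such vectors, so the correcting property forces
consecutive encodings `A[x_k] ≤ A[x_{k+1}]` to be `(e₀, e₁)`-far in both directions; hence each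
step adds more than `max e₀ e₁` ones, and `A[x_t]` with `t (e₀' + e₁' + 1) = d` has weight at
least `t (max e₀ e₁ + 1)`, which is at most `m`. -/

/-- `(x, y)` is `(e₀, e₁)`-close: `y` is obtained from `x` by flipping at most `e₀`
bits from `0` to `1` and at most `e₁` bits from `1` to `0`. -/
def Close {ι : Type*} [Fintype ι] (e0 e1 : ℕ) (x y : ι → Bool) : Prop :=
  (Finset.univ.filter fun i => x i = false ∧ y i = true).card ≤ e0 ∧
  (Finset.univ.filter fun i => x i = true ∧ y i = false).card ≤ e1

/-- `Meas A x = A[x]`: the bitwise OR of the columns of `A` indexed by the support of `x`. -/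
def Meas {ι κ : Type*} [Fintype ι] (A : κ → ι → Bool) (x : ι → Bool) : κ → Bool :=
  fun j => decide (∃ i, A j i = true ∧ x i = true)

/-- `x` is `d`-sparse: it has at most `d` nonzero coordinates. -/
def Sparse {ι : Type*} [Fintype ι] (d : ℕ) (x : ι → Bool) : Prop :=
  (Finset.univ.filter fun i => x i = true).card ≤ d

/-- `A` is `(e₀, e₁, e₀', e₁')`-correcting for `d`-sparse vectors: for every `y` there is a
valid decoding `z` such that for every `d`-sparse `x`, whenever `(x, z)` are `(e₀', e₁')`-far,
`(A[x], y)` are `(e₀, e₁)`-far. -/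
def Correcting {m n : ℕ} (A : Fin m → Fin n → Bool) (d e0 e1 e0' e1' : ℕ) : Prop :=
  ∀ y : Fin m → Bool, ∃ z : Fin n → Bool, ∀ x : Fin n → Bool, Sparse d x →
    ¬ Close e0' e1' x z → ¬ Close e0 e1 (Meas A x) y

open Finset

section BoolVectors

variable {ι : Type*} [Fintype ι]

def weight (x : ι → Bool) : ℕ := #{i | x i = true}

theorem weight_le_card (x : ι → Bool) : weight x ≤ Fintype.card ι :=
  card_filter_le _ _

theorem weight_eq_add_card_of_le {u v : ι → Bool} (h : u ≤ v) :
    weight v = weight u + #{i | u i = false ∧ v i = true} := by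
  simp only [weight, card_filter, ← sum_add_distrib]
  refine sum_congr rfl fun i _ => ?_
  have hi : u i = true → v i = true := Bool.le_iff_imp.mp (h i)
  cases hu : u i <;> cases hv : v i <;> simp_all

theorem card_dropped_eq_zero_of_le {u v : ι → Bool} (h : u ≤ v) :
    #{i | u i = true ∧ v i = false} = 0 :=
  card_eq_zero.mpr <| filter_eq_empty_iff.mpr fun i _ ⟨hu, hv⟩ => by
    simpa [hv] using Bool.le_iff_imp.mp (h i) hu

theorem close_iff_of_le {e0 e1 : ℕ} {u v : ι → Bool} (h : u ≤ v) :
    Close e0 e1 u v ↔ #{i | u i = false ∧ v i = true} ≤ e0 := by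
  simp [Close, card_dropped_eq_zero_of_le h]

theorem close_swap_iff_of_le {e0 e1 : ℕ} {u v : ι → Bool} (h : u ≤ v) :
    Close e0 e1 v u ↔ #{i | u i = false ∧ v i = true} ≤ e1 := by
  simp only [Close, and_comm (a := v _ = _), card_dropped_eq_zero_of_le h]
  simp

theorem close_refl (e0 e1 : ℕ) (u : ι → Bool) : Close e0 e1 u u := by
  constructor <;> simp

/-- A coordinate raised from `x` to `x'` is either a `0 → 1` flip from `x` to `z` or a
`1 → 0` flip from `x'` to `z`. -/
theorem card_raised_le_of_close {a b a' b' : ℕ} {x x' z : ι → Bool}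
    (hx : Close a b x z) (hx' : Close a' b' x' z) :
    #{i | x i = false ∧ x' i = true} ≤ a + b' := by
  rw [← card_filter_add_card_filter_not (p := fun i => z i = true)]
  refine add_le_add ((card_le_card ?_).trans hx.1) ((card_le_card ?_).trans hx'.2) <;>
  · intro i hi
    simp_all

theorem meas_mono {κ : Type*} (A : κ → ι → Bool) : Monotone (Meas A) := by
  intro x x' h j
  simp only [Meas, Bool.le_iff_imp, decide_eq_true_eq]
  exact fun ⟨i, hA, hx⟩ => ⟨i, hA, Bool.le_iff_imp.mp (h i) hx⟩

end BoolVectors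

def prefixIndicator (n a : ℕ) : Fin n → Bool := fun j => decide (j.val < a)

theorem prefixIndicator_mono (n : ℕ) : Monotone (prefixIndicator n) := by
  intro a b h j
  simp only [prefixIndicator, Bool.le_iff_imp, decide_eq_true_eq]
  omega

theorem weight_prefixIndicator (n a : ℕ) : weight (prefixIndicator n a) = min n a := by
  simpa [weight, prefixIndicator] using Fin.card_filter_val_lt

theorem card_raised_prefixIndicator {n a b : ℕ} (hab : a ≤ b) (hbn : b ≤ n) :
    #{i | prefixIndicator n a i = false ∧ prefixIndicator n b i = true} = b - a := by
  have h := weight_eq_add_card_of_le (prefixIndicator_mono n hab)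
  rw [weight_prefixIndicator, weight_prefixIndicator] at h
  omega

namespace Correcting

variable {m n d e0 e1 e0' e1' : ℕ} {A : Fin m → Fin n → Bool}

theorem exists_close_of_close_meas (hA : Correcting A d e0 e1 e0' e1') {u v : Fin n → Bool}
    (hu : Sparse d u) (hv : Sparse d v) (h : Close e0 e1 (Meas A u) (Meas A v)) :
    ∃ z, Close e0' e1' u z ∧ Close e0' e1' v z := by
  obtain ⟨z, hz⟩ := hA (Meas A v)
  exact ⟨z, not_not.mp fun hfar => hz u hu hfar h,
    not_not.mp fun hfar => hz v hv hfar (close_refl e0 e1 _)⟩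

theorem weight_meas_add_le (hA : Correcting A d e0 e1 e0' e1') {u v : Fin n → Bool}
    (hu : Sparse d u) (hv : Sparse d v) (huv : u ≤ v)
    (hgap : e0' + e1' < #{i | u i = false ∧ v i = true}) :
    weight (Meas A u) + (max e0 e1 + 1) ≤ weight (Meas A v) := by
  have hmono := meas_mono A huv
  have hfar : ¬ Close e0 e1 (Meas A u) (Meas A v) := fun h => by
    obtain ⟨z, huz, hvz⟩ := hA.exists_close_of_close_meas hu hv h
    exact hgap.not_ge (card_raised_le_of_close huz hvz)
  have hfar' : ¬ Close e0 e1 (Meas A v) (Meas A u) := fun h => by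
    obtain ⟨z, hvz, huz⟩ := hA.exists_close_of_close_meas hv hu h
    exact hgap.not_ge (card_raised_le_of_close huz hvz)
  rw [close_iff_of_le hmono, not_le] at hfar
  rw [close_swap_iff_of_le hmono, not_le] at hfar'
  rw [weight_eq_add_card_of_le hmono]
  omega

theorem mul_le_weight_meas_prefixIndicator (hA : Correcting A d e0 e1 e0' e1') (hdn : d ≤ n)
    {k : ℕ} (hk : k * (e0' + e1' + 1) ≤ d) :
    k * (max e0 e1 + 1) ≤ weight (Meas A (prefixIndicator n (k * (e0' + e1' + 1)))) := by
  induction k with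
  | zero => simp
  | succ k ih =>
    set s := e0' + e1' + 1
    have hsparse : ∀ j, j * s ≤ d → Sparse d (prefixIndicator n (j * s)) := fun j hj => by
      change weight _ ≤ d
      rw [weight_prefixIndicator]
      omega
    have hks : k * s ≤ (k + 1) * s := Nat.mul_le_mul_right s k.le_succ
    have hgap := card_raised_prefixIndicator hks (hk.trans hdn)
    have hstep := hA.weight_meas_add_le (hsparse k (hks.trans hk)) (hsparse (k + 1) hk)
      (prefixIndicator_mono n hks) (by rw [hgap, Nat.succ_mul]; omega)
    rw [Nat.succ_mul]
    exact (Nat.add_le_add_right (ih (hks.trans hk)) _).trans hstep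

theorem mul_succ_max_le (hA : Correcting A d e0 e1 e0' e1') (hdn : d ≤ n) {t : ℕ}
    (ht : t * (e0' + e1' + 1) ≤ d) : t * (max e0 e1 + 1) ≤ m :=
  (hA.mul_le_weight_meas_prefixIndicator hdn ht).trans
    ((weight_le_card _).trans (Fintype.card_fin m).le)

end Correcting

/-- If an `m × n` matrix `A` is `(e₀, e₁, e₀', e₁')`-correcting for `d`-sparse
vectors and `(e₀'+e₁'+1) ∣ d`, then `(max{e₀,e₁}+1)/(e₀'+e₁'+1) ≤ m/d`. -/
theorem stmt7 (m n d e0 e1 e0' e1' : ℕ) (A : Fin m → Fin n → Bool)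
    (hd : 0 < d) (hdn : d ≤ n) (hdvd : (e0' + e1' + 1) ∣ d)
    (hA : Correcting A d e0 e1 e0' e1') :
    ((max e0 e1 : ℝ) + 1) / ((e0' : ℝ) + e1' + 1) ≤ (m : ℝ) / d := by
  obtain ⟨t, rfl⟩ := hdvd
  have hnat : t * (max e0 e1 + 1) ≤ m := hA.mul_succ_max_le hdn (Nat.mul_comm _ _).le
  have hreal : (t : ℝ) * ((max e0 e1 : ℝ) + 1) ≤ m := by exact_mod_cast hnat
  have ht : (0 : ℝ) < t := by exact_mod_cast Nat.pos_of_mul_pos_left hd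
  rw [div_le_div_iff₀ (by positivity) (by exact_mod_cast hd)]
  push_cast
  nlinarith
end

section
/- Let f : F₂ⁿ × F₂ᵗ → F₂^ℓ be a strong k →_ε k' condenser and C ⊆ Σ^{2^t} its induced code, where Σ = F₂^ℓ. Then for any mixture S over Σ^{2^t}, the agreement list satisfies |LIST_C(S, ρ(S)·2^{ℓ−k'} + ε)| < 2^k. -/
open scoped Classical

/-- `p` is a probability distribution on the finite type `α`. -/
def IsDist {α : Type*} [Fintype α] (p : α → ℝ) : Prop :=
  (∀ a, 0 ≤ p a) ∧ ∑ a, p a = 1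

/-- The distribution `p` has min-entropy at least `k`, i.e. `p a ≤ 2^{-k}` for all `a`. -/
def MinEntGe {α : Type*} [Fintype α] (p : α → ℝ) (k : ℝ) : Prop :=
  ∀ a, p a ≤ (2 : ℝ) ^ (-k)

/-- Statistical distance between two distributions on a finite type. -/
noncomputable def sdist {α : Type*} [Fintype α] (p q : α → ℝ) : ℝ :=
  (∑ a, |p a - q a|) / 2

/-- The distribution of `(Y, f(X, Y))` where `X ∼ p` and `Y` is a uniform seed. -/
noncomputable def jointDist (n t l : ℕ) (f : (Fin n → Bool) → (Fin t → Bool) → (Fin l → Bool))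
    (p : (Fin n → Bool) → ℝ) : (Fin t → Bool) × (Fin l → Bool) → ℝ :=
  fun yz => (∑ x : Fin n → Bool, if f x yz.1 = yz.2 then p x else 0) / 2 ^ t

/-- `f : F₂ⁿ × F₂ᵗ → F₂ˡ` is a strong `k →_ε k'` condenser: for every distribution of
min-entropy at least `k`, the distribution of `(Y, f(X,Y))` (with uniform seed `Y`) is
`ε`-close to some distribution of min-entropy at least `t + k'`. -/
def IsCondenser (n t l : ℕ) (f : (Fin n → Bool) → (Fin t → Bool) → (Fin l → Bool))
    (k ε k' : ℝ) : Prop :=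
  ∀ p : (Fin n → Bool) → ℝ, IsDist p → MinEntGe p k →
    ∃ q : (Fin t → Bool) × (Fin l → Bool) → ℝ, IsDist q ∧
      MinEntGe q ((t : ℝ) + k') ∧ sdist (jointDist n t l f p) q ≤ ε

/-- The agreement `Agr(w, S)` of a word with a mixture `S`. -/
noncomputable def agr (t l : ℕ) (w : (Fin t → Bool) → (Fin l → Bool))
    (S : (Fin t → Bool) → Finset (Fin l → Bool)) : ℝ :=
  ((Finset.univ.filter fun i => w i ∈ S i).card : ℝ) / 2 ^ t

/-- `ρ(S) = wgt(S)/(n|Σ|)`, the expected agreement of a random word with `S`. -/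
noncomputable def mixRho (t l : ℕ) (S : (Fin t → Bool) → Finset (Fin l → Bool)) : ℝ :=
  (∑ i, ((S i).card : ℝ)) / (2 ^ t * 2 ^ l)

/-! Suppose at least `2^k` inputs `x` give codewords `f x` with agreement above
`α = ρ(S)·2^{ℓ-k'} + ε`. The flat distribution `X` on those inputs has min-entropy `k`, so
`(Y, f(X,Y))` is `ε`-close to some `Q` of min-entropy `t + k'`. The event `f(X,Y) ∈ S_Y` has
probability `E[Agr(f X, S)] > α`, while under `Q` the same event, a set of `wgt(S)` points, has
probability at most `wgt(S)·2^{-(t+k')} = ρ(S)·2^{ℓ-k'}`; the two differ by more than `ε`. -/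

open Finset
open scoped BigOperators

section Distributions

variable {α : Type*} [Fintype α]

theorem sum_sub_sum_le_sdist {p q : α → ℝ} (hpq : ∑ a, p a = ∑ a, q a) (E : Finset α) :
    ∑ a ∈ E, p a - ∑ a ∈ E, q a ≤ sdist p q := by
  have hpos : ∀ a, 0 ≤ (|p a - q a| + (p a - q a)) / 2 := fun a => by
    have := neg_abs_le (p a - q a); linarith
  calc ∑ a ∈ E, p a - ∑ a ∈ E, q a = ∑ a ∈ E, (p a - q a) := (sum_sub_distrib _ _).symm
    _ ≤ ∑ a ∈ E, (|p a - q a| + (p a - q a)) / 2 :=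
        sum_le_sum fun a _ => by have := le_abs_self (p a - q a); linarith
    _ ≤ ∑ a, (|p a - q a| + (p a - q a)) / 2 :=
        sum_le_sum_of_subset_of_nonneg (subset_univ E) fun a _ _ => hpos a
    _ = ((∑ a, |p a - q a|) + (∑ a, p a - ∑ a, q a)) / 2 := by
        rw [← sum_div, sum_add_distrib, sum_sub_distrib]
    _ = sdist p q := by rw [hpq, sub_self, add_zero, sdist]

theorem MinEntGe.sum_le {q : α → ℝ} {k : ℝ} (hq : MinEntGe q k) (E : Finset α) :
    ∑ a ∈ E, q a ≤ E.card * (2 : ℝ) ^ (-k) := by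
  simpa using sum_le_card_nsmul E q _ fun a _ => hq a

noncomputable def flatDist (T : Finset α) (a : α) : ℝ :=
  if a ∈ T then ((T.card : ℝ))⁻¹ else 0

theorem sum_flatDist_mul (T : Finset α) (g : α → ℝ) :
    ∑ a, flatDist T a * g a = 𝔼 a ∈ T, g a := by
  simp only [flatDist, ite_mul, zero_mul, sum_ite_mem, univ_inter, expect_eq_sum_div_card,
    sum_div]
  exact sum_congr rfl fun a _ => inv_mul_eq_div _ _

theorem isDist_flatDist {T : Finset α} (hT : T.Nonempty) : IsDist (flatDist T) := by
  refine ⟨fun a => ?_, ?_⟩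
  · unfold flatDist; split_ifs <;> positivity
  · simpa using (sum_flatDist_mul T 1).trans (expect_const hT 1)

theorem minEntGe_flatDist {T : Finset α} {k : ℝ} (hT : (2 : ℝ) ^ k ≤ T.card) :
    MinEntGe (flatDist T) k := by
  intro a
  rw [Real.rpow_neg zero_le_two]
  unfold flatDist
  split_ifs
  · exact inv_anti₀ (by positivity) hT
  · positivity

end Distributions

noncomputable def mixtureSet {α β : Type*} [Fintype α] [Fintype β] (S : α → Finset β) :
    Finset (α × β) :=
  univ.filter fun ab => ab.2 ∈ S ab.1

theorem card_mixtureSet {α β : Type*} [Fintype α] [Fintype β] (S : α → Finset β) :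
    (mixtureSet S).card = ∑ a, (S a).card := by
  rw [mixtureSet, card_filter, Fintype.sum_prod_type]
  simp

section Condenser

variable {n t l : ℕ} (f : (Fin n → Bool) → (Fin t → Bool) → (Fin l → Bool))
  (p : (Fin n → Bool) → ℝ)

theorem sum_jointDist : ∑ yz, jointDist n t l f p yz = ∑ x, p x := by
  simp only [jointDist, ← sum_div, Fintype.sum_prod_type]
  rw [div_eq_iff (by positivity)]
  have hy : ∀ y : Fin t → Bool,
      ∑ z : Fin l → Bool, ∑ x, (if f x y = z then p x else 0) = ∑ x, p x := fun y => by
    rw [sum_comm]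
    simp
  simp [hy, mul_comm]

theorem sum_jointDist_mixtureSet (S : (Fin t → Bool) → Finset (Fin l → Bool)) :
    ∑ yz ∈ mixtureSet S, jointDist n t l f p yz = ∑ x, p x * agr t l (f x) S := by
  have hrow : ∀ x, ∑ yz ∈ mixtureSet S, (if f x yz.1 = yz.2 then p x else 0) =
      p x * (univ.filter fun y => f x y ∈ S y).card := fun x => by
    simp only [mixtureSet, sum_filter, Fintype.sum_prod_type, sum_ite_mem, univ_inter,
      sum_ite_eq]
    rw [← sum_filter, sum_const, nsmul_eq_mul, mul_comm]
  simp only [jointDist, ← sum_div]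
  rw [sum_comm]
  simp [hrow, agr, sum_div, mul_div_assoc]

end Condenser

theorem mixRho_mul_rpow (t l : ℕ) (S : (Fin t → Bool) → Finset (Fin l → Bool)) (k' : ℝ) :
    ((∑ i, (S i).card : ℕ) : ℝ) * (2 : ℝ) ^ (-((t : ℝ) + k')) =
      mixRho t l S * (2 : ℝ) ^ ((l : ℝ) - k') := by
  have h2 : (0 : ℝ) < 2 := two_pos
  rw [mixRho, neg_add, Real.rpow_add h2, sub_eq_add_neg, Real.rpow_add h2, Real.rpow_neg h2.le,
    Real.rpow_natCast, Real.rpow_natCast]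
  push_cast
  field_simp

theorem IsCondenser.card_filter_agr_lt {n t l : ℕ}
    {f : (Fin n → Bool) → (Fin t → Bool) → (Fin l → Bool)} {k ε k' : ℝ}
    (hf : IsCondenser n t l f k ε k') (S : (Fin t → Bool) → Finset (Fin l → Bool)) :
    ((univ.filter fun x => mixRho t l S * (2 : ℝ) ^ ((l : ℝ) - k') + ε < agr t l (f x) S).card
      : ℝ) < (2 : ℝ) ^ k := by
  set T := univ.filter fun x => mixRho t l S * (2 : ℝ) ^ ((l : ℝ) - k') + ε < agr t l (f x) S
  by_contra! hT
  have hTne : T.Nonempty :=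
    card_pos.mp (by exact_mod_cast (Real.rpow_pos_of_pos two_pos k).trans_le hT)
  have hflat := isDist_flatDist hTne
  obtain ⟨q, hq, hqk, hpq⟩ := hf _ hflat (minEntGe_flatDist hT)
  have hagr : mixRho t l S * (2 : ℝ) ^ ((l : ℝ) - k') + ε <
      ∑ yz ∈ mixtureSet S, jointDist n t l f (flatDist T) yz := by
    rw [sum_jointDist_mixtureSet, sum_flatDist_mul]
    obtain ⟨x, hx⟩ := hTne
    exact lt_expect (fun y hy => (mem_filter.mp hy).2.le) ⟨x, hx, (mem_filter.mp hx).2⟩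
  have hclose := sum_sub_sum_le_sdist (p := jointDist n t l f (flatDist T)) (q := q)
    (by rw [sum_jointDist, hq.2, hflat.2]) (mixtureSet S)
  have hq_le := hqk.sum_le (mixtureSet S)
  rw [card_mixtureSet, mixRho_mul_rpow] at hq_le
  linarith

theorem stmt11_general (n t l : ℕ) (f : (Fin n → Bool) → (Fin t → Bool) → (Fin l → Bool))
    (k ε k' : ℝ) (hf : IsCondenser n t l f k ε k')
    (S : (Fin t → Bool) → Finset (Fin l → Bool)) :
    (((((Finset.univ : Finset (Fin n → Bool)).image fun x => fun i => f x i)).filter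
        fun w => mixRho t l S * (2 : ℝ) ^ ((l : ℝ) - k') + ε < agr t l w S).card : ℝ)
      < (2 : ℝ) ^ k :=
  calc _ ≤ ((univ.filter fun x =>
          mixRho t l S * (2 : ℝ) ^ ((l : ℝ) - k') + ε < agr t l (f x) S).card : ℝ) := by
        rw [filter_image]
        exact_mod_cast card_image_le
    _ < (2 : ℝ) ^ k := hf.card_filter_agr_lt S

/-- If `f` is a strong `k →_ε k'` condenser and `C` its induced code, then for any
mixture `S`, `|LIST_C(S, ρ(S)·2^{ℓ−k'} + ε)| < 2^k`. -/
theorem stmt11 (n t l : ℕ) (f : (Fin n → Bool) → (Fin t → Bool) → (Fin l → Bool))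
    (k ε k' : ℝ) (hf : IsCondenser n t l f k ε k')
    (S : (Fin t → Bool) → Finset (Fin l → Bool)) (hS : ∀ i, (S i).Nonempty) :
    (((((Finset.univ : Finset (Fin n → Bool)).image fun x => fun i => f x i)).filter
        fun w => mixRho t l S * (2 : ℝ) ^ ((l : ℝ) - k') + ε < agr t l w S).card : ℝ)
      < (2 : ℝ) ^ k :=
  stmt11_general n t l f k ε k' hf S
end

section
/- Let A be an m × n binary matrix, x ∈ F₂ⁿ of weight d, and let x' be obtained from x by flipping a uniformly random set of e'₁+1 ones to zero. Then the expected Hamming distance between A[x] and A[x'] is at most (e'₁+1)·m/d. -/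
/-- The number of `(k+1)`-subsets of `S` containing a fixed element `i ∈ S`. -/
lemma count_containing {α : Type*} [DecidableEq α] (S : Finset α) (i : α) (hi : i ∈ S)
    (k : ℕ) :
    ((S.powersetCard (k + 1)).filter (fun F => i ∈ F)).card
      = Nat.choose (S.card - 1) k := by
  rw [← Finset.card_erase_of_mem hi, ← Finset.card_powersetCard]
  refine Finset.card_bij' (fun F _ => F.erase i) (fun G _ => insert i G) ?_ ?_ ?_ ?_
  · intro F hF
    simp only [Finset.mem_filter, Finset.mem_powersetCard] at hF
    obtain ⟨⟨hsub, hcard⟩, hiF⟩ := hF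
    rw [Finset.mem_powersetCard]
    constructor
    · intro a ha
      rw [Finset.mem_erase] at ha ⊢
      exact ⟨ha.1, hsub ha.2⟩
    · rw [Finset.card_erase_of_mem hiF, hcard]; rfl
  · intro G hG
    rw [Finset.mem_powersetCard] at hG
    obtain ⟨hsub, hcard⟩ := hG
    have hiG : i ∉ G := fun h => (Finset.mem_erase.1 (hsub h)).1 rfl
    simp only [Finset.mem_filter, Finset.mem_powersetCard]
    refine ⟨⟨?_, ?_⟩, Finset.mem_insert_self i G⟩
    · intro a ha
      rcases Finset.mem_insert.1 ha with rfl | h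
      · exact hi
      · exact (Finset.mem_erase.1 (hsub h)).2
    · rw [Finset.card_insert_of_notMem hiG, hcard]
  · intro F hF
    simp only [Finset.mem_filter] at hF
    exact Finset.insert_erase hF.2
  · intro G hG
    rw [Finset.mem_powersetCard] at hG
    have hiG : i ∉ G := fun h => (Finset.mem_erase.1 (hG.1 h)).1 rfl
    exact Finset.erase_insert hiG

/-- Flipping a uniformly random set of `e₁'+1` ones of a weight-`d` vector `x` to zero
changes the measurement outcome `A[x]` by at most `(e₁'+1)·m/d` in expected Hamming
distance. -/
theorem stmt17 (m n d e1' : ℕ) (A : Fin m → Fin n → Bool) (x : Fin n → Bool)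
    (hd : (Finset.univ.filter fun i => x i = true).card = d) (hd0 : 0 < d) :
    (∑ F ∈ ((Finset.univ.filter fun i => x i = true)).powersetCard (e1' + 1),
        (hammingDist (Meas A x)
          (Meas A fun i => if i ∈ F then false else x i) : ℝ)) /
      ((((Finset.univ.filter fun i => x i = true)).powersetCard (e1' + 1)).card : ℝ)
      ≤ ((e1' : ℝ) + 1) * m / d := by
  set S := (Finset.univ.filter fun i => x i = true) with hS
  set k := e1' + 1 with hk
  by_cases hkd : k ≤ d
  · -- nonempty case
    have hCpos : 0 < (S.powersetCard k).card := by
      rw [Finset.card_powersetCard, hd]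
      exact Nat.choose_pos hkd
    -- key per-row, per-F bound, summed: the ℕ-valued total
    have key : d * ∑ F ∈ S.powersetCard k,
        hammingDist (Meas A x) (Meas A fun i => if i ∈ F then false else x i)
        ≤ k * m * Nat.choose d k := by
      have swap : ∑ F ∈ S.powersetCard k,
          hammingDist (Meas A x) (Meas A fun i => if i ∈ F then false else x i)
          = ∑ j : Fin m, ((S.powersetCard k).filter
              (fun F => Meas A x j ≠ Meas A (fun i => if i ∈ F then false else x i) j)).card := by
        simp only [hammingDist, Finset.card_filter]
        rw [Finset.sum_comm]
      rw [swap]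
      have hrow : ∀ j : Fin m, ((S.powersetCard k).filter
          (fun F => Meas A x j ≠ Meas A (fun i => if i ∈ F then false else x i) j)).card
          ≤ Nat.choose (d - 1) e1' := by
        intro j
        by_cases hMj : Meas A x j = true
        · -- pick witness i0
          have : ∃ i, A j i = true ∧ x i = true := by
            simpa [Meas] using hMj
          obtain ⟨i0, hAi0, hxi0⟩ := this
          have hi0S : i0 ∈ S := by simp [hS, hxi0]
          calc ((S.powersetCard k).filter
              (fun F => Meas A x j ≠ Meas A (fun i => if i ∈ F then false else x i) j)).card
              ≤ ((S.powersetCard k).filter (fun F => i0 ∈ F)).card := by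
                apply Finset.card_le_card
                intro F hF
                simp only [Finset.mem_filter] at hF ⊢
                refine ⟨hF.1, ?_⟩
                by_contra hi0F
                apply hF.2
                rw [hMj]
                symm
                simp only [Meas, decide_eq_true_eq]
                exact ⟨i0, hAi0, by simp [hi0F, hxi0]⟩
            _ = Nat.choose (S.card - 1) e1' := count_containing S i0 hi0S e1'
            _ = Nat.choose (d - 1) e1' := by rw [hd]
        · -- Meas A x j = false, then Meas A x' j = false too: no F counted
          have hfalse : Meas A x j = false := by
            cases h : Meas A x j
            · rfl
            · exact absurd h hMj
          have : ((S.powersetCard k).filter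
              (fun F => Meas A x j ≠ Meas A (fun i => if i ∈ F then false else x i) j)) = ∅ := by
            apply Finset.filter_false_of_mem
            intro F _
            simp only [ne_eq, not_not]
            rw [hfalse]
            symm
            simp only [Meas, decide_eq_false_iff_not] at hfalse ⊢
            rintro ⟨i, hAi, hxi⟩
            by_cases hiF : i ∈ F
            · simp [hiF] at hxi
            · simp only [hiF, if_false] at hxi
              exact hfalse ⟨i, hAi, hxi⟩
          rw [this]
          simp
      calc d * ∑ j : Fin m, ((S.powersetCard k).filter
            (fun F => Meas A x j ≠ Meas A (fun i => if i ∈ F then false else x i) j)).card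
          ≤ d * ∑ _j : Fin m, Nat.choose (d - 1) e1' := by
            apply Nat.mul_le_mul_left
            exact Finset.sum_le_sum (fun j _ => hrow j)
        _ = m * (d * Nat.choose (d - 1) e1') := by
            rw [Finset.sum_const, Finset.card_univ, Fintype.card_fin, smul_eq_mul]; ring
        _ = m * (Nat.choose d k * k) := by
            congr 1
            have := Nat.add_one_mul_choose_eq (d - 1) e1'
            have hd1 : d - 1 + 1 = d := Nat.succ_pred_eq_of_pos hd0
            rw [← hd1]
            simpa [hk] using this
        _ = k * m * Nat.choose d k := by ring
    -- convert to ℝ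
    rw [div_le_div_iff₀ (by exact_mod_cast hCpos) (by exact_mod_cast hd0)]
    have : (∑ F ∈ S.powersetCard k,
        (hammingDist (Meas A x) (Meas A fun i => if i ∈ F then false else x i) : ℝ))
        = ((∑ F ∈ S.powersetCard k,
            hammingDist (Meas A x) (Meas A fun i => if i ∈ F then false else x i) : ℕ) : ℝ) := by
      push_cast; rfl
    rw [this]
    have hcard : ((S.powersetCard k).card : ℝ) = (Nat.choose d k : ℝ) := by
      rw [Finset.card_powersetCard, hd]
    rw [hcard]
    have key' : ((d : ℝ)) * ((∑ F ∈ S.powersetCard k,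
        hammingDist (Meas A x) (Meas A fun i => if i ∈ F then false else x i) : ℕ) : ℝ)
        ≤ (k : ℝ) * m * Nat.choose d k := by
      exact_mod_cast key
    have hkr : ((e1' : ℝ) + 1) = (k : ℝ) := by push_cast [hk]; ring
    rw [hkr]
    nlinarith [key']
  · -- empty case: k > d
    have : S.powersetCard k = ∅ := by
      rw [Finset.powersetCard_eq_empty, hd]
      omega
    rw [this]
    simp only [Finset.sum_empty, Finset.card_empty, Nat.cast_zero, div_zero]
    positivity
end
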